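/- arXiv:2005.00501 — 2 statements merged into one kernel-verified Lean document; each statement's English description precedes it below -/
import Mathlib

section
/- Let Δ be an n×m real matrix with ‖Δa‖ < 1 for every unit vector a ∈ ℝ^m, and let Z* be an n-dimensional random vector with density f(z) = 2^m · φ_n(z) · Φ_m(Δ′z | I_m − Δ′Δ) on ℝ^n (the CFUSN_{n,m}(Δ) distribution). Then the random vector Y = exp(Z*) (componentwise exponential) has density f_Y(y) = 2^m · (∏_{i=1}^n y_i)^{-1} · φ_n(ln y) · Φ_m(Δ′ ln y | I_m − Δ′Δ) for y ∈ (0,∞)^n, where ln y denotes the componentwise logarithm. -/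
open MeasureTheory Matrix Real ProbabilityTheory

noncomputable def stdNormalPdf {ι : Type*} [Fintype ι] (x : ι → ℝ) : ℝ :=
  (2 * π) ^ (-(Fintype.card ι : ℝ) / 2) * Real.exp (-(∑ i, x i ^ 2) / 2)

noncomputable def normalPdf {ι : Type*} [Fintype ι] [DecidableEq ι]
    (μ : ι → ℝ) (S : Matrix ι ι ℝ) (x : ι → ℝ) : ℝ :=
  (2 * π) ^ (-(Fintype.card ι : ℝ) / 2) * S.det ^ (-(1 : ℝ) / 2) *
    Real.exp (-((x - μ) ⬝ᵥ (S⁻¹ *ᵥ (x - μ))) / 2)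

noncomputable def normalCdf {ι : Type*} [Fintype ι] [DecidableEq ι]
    (μ : ι → ℝ) (S : Matrix ι ι ℝ) (z : ι → ℝ) : ℝ :=
  ∫ x in Set.Iic z, normalPdf μ S x

noncomputable def cfusnPdf {ι κ : Type*} [Fintype ι] [Fintype κ] [DecidableEq κ]
    (Δ : Matrix ι κ ℝ) (z : ι → ℝ) : ℝ :=
  2 ^ Fintype.card κ * stdNormalPdf z * normalCdf 0 (1 - Δᵀ * Δ) (Δᵀ *ᵥ z)

noncomputable def lcfusnPdf {ι κ : Type*} [Fintype ι] [Fintype κ] [DecidableEq κ]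
    (Δ : Matrix ι κ ℝ) (y : ι → ℝ) : ℝ :=
  if ∀ i, 0 < y i then
    2 ^ Fintype.card κ * (∏ i, y i)⁻¹ * stdNormalPdf (fun i => Real.log (y i)) *
      normalCdf 0 (1 - Δᵀ * Δ) (Δᵀ *ᵥ fun i => Real.log (y i))
  else 0

/-!
The componentwise exponential is a diffeomorphism of `ℝⁿ` onto the open positive orthant whose
Jacobian at `z` is `∏ exp zᵢ = ∏ yᵢ`. By the change-of-variables formula, the law of `exp Z*` has
density `f_{Z*}(log y) / ∏ yᵢ` on the orthant and `0` off it, which is the LCFUSN density.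
-/

open scoped ENNReal

theorem map_withDensity_eq_withDensity_of_abs_det_fderiv_mul
    {E : Type*} [NormedAddCommGroup E] [NormedSpace ℝ E] [FiniteDimensional ℝ E]
    [MeasurableSpace E] [BorelSpace E] (μ : Measure E) [μ.IsAddHaarMeasure]
    {f : E → E} {f' : E → E →L[ℝ] E} (hf' : ∀ x, HasFDerivAt f (f' x) x)
    (hf : Function.Injective f) {g h : E → ℝ≥0∞}
    (hgh : ∀ x, ENNReal.ofReal |(f' x).det| * h (f x) = g x)
    (h_zero : ∀ y, y ∉ Set.range f → h y = 0) :
    (μ.withDensity g).map f = μ.withDensity h := by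
  have hf_meas : Measurable f :=
    (continuous_iff_continuousAt.2 fun x => (hf' x).continuousAt).measurable
  have hrange : MeasurableSet (Set.range f) := by
    simpa only [Set.image_univ] using
      measurable_image_of_fderivWithin MeasurableSet.univ
        (fun x _ => (hf' x).hasFDerivWithinAt) hf.injOn
  ext A hA
  have h_supp : Function.support h ⊆ Set.range f :=
    Function.support_subset_iff'.2 h_zero
  calc (μ.withDensity g).map f A
      = ∫⁻ x in f ⁻¹' A, ENNReal.ofReal |(f' x).det| * h (f x) ∂μ := by
        simp only [Measure.map_apply hf_meas hA, withDensity_apply _ (hf_meas hA), hgh]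
    _ = ∫⁻ y in f '' (f ⁻¹' A), h y ∂μ :=
        (lintegral_image_eq_lintegral_abs_det_fderiv_mul μ (hf_meas hA)
          (fun x _ => (hf' x).hasFDerivWithinAt) hf.injOn h).symm
    _ = ∫⁻ y in Set.range f, h y ∂(μ.restrict A) := by
        rw [Set.image_preimage_eq_range_inter, Measure.restrict_restrict hrange]
    _ = μ.withDensity h A := by
        rw [setLIntegral_eq_of_support_subset h_supp, withDensity_apply _ hA]

theorem hasFDerivAt_pi_map_diagonal {ι : Type*} [Fintype ι] [DecidableEq ι]
    {φ φ' : ℝ → ℝ} {x : ι → ℝ} (hφ : ∀ i, HasDerivAt φ (φ' (x i)) (x i)) :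
    HasFDerivAt (fun y i => φ (y i))
      (LinearMap.toContinuousLinearMap (toLin' (diagonal fun i => φ' (x i)))) x := by
  refine hasFDerivAt_pi'.2 fun i => ?_
  refine ((hφ i).comp_hasFDerivAt (f := fun y : ι → ℝ => y i) x
    (hasFDerivAt_apply (𝕜 := ℝ) i x)).congr_fderiv ?_
  ext v
  simp [mulVec_diagonal]

theorem prod_exp_mul_lcfusnPdf_exp {ι κ : Type*} [Fintype ι] [Fintype κ] [DecidableEq κ]
    (Δ : Matrix ι κ ℝ) (z : ι → ℝ) :
    (∏ i, Real.exp (z i)) * lcfusnPdf Δ (fun i => Real.exp (z i)) = cfusnPdf Δ z := by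
  simp only [lcfusnPdf, exp_pos, implies_true, if_true, Real.log_exp, cfusnPdf]
  field_simp

theorem lcfusn_density_of_cfusn_general
    {Ω : Type*} [MeasureSpace Ω]
    (n m : ℕ) (Δ : Matrix (Fin n) (Fin m) ℝ)
    (Z : Ω → Fin n → ℝ) (hZ : Measurable Z)
    (hlaw : Measure.map Z volume =
      (volume : Measure (Fin n → ℝ)).withDensity fun z => ENNReal.ofReal (cfusnPdf Δ z)) :
    Measure.map (fun ω i => Real.exp (Z ω i)) volume =
      (volume : Measure (Fin n → ℝ)).withDensity fun y => ENNReal.ofReal (lcfusnPdf Δ y) := by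
  have hexp : ∀ z : Fin n → ℝ, HasFDerivAt (fun y i => Real.exp (y i))
      (LinearMap.toContinuousLinearMap (toLin' (diagonal fun i => Real.exp (z i)))) z :=
    fun z => hasFDerivAt_pi_map_diagonal fun i => hasDerivAt_exp (z i)
  have hexp_meas : Measurable fun (z : Fin n → ℝ) i => Real.exp (z i) := by fun_prop
  rw [show (fun ω i => Real.exp (Z ω i)) = (fun z i => Real.exp (z i)) ∘ Z from rfl,
    ← Measure.map_map hexp_meas hZ, hlaw]
  refine map_withDensity_eq_withDensity_of_abs_det_fderiv_mul volume hexp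
    (fun a b hab => funext fun i => Real.exp_injective (congrFun hab i)) (fun z => ?_) ?_
  · have hprod : 0 < ∏ i, Real.exp (z i) := Finset.prod_pos fun i _ => exp_pos _
    rw [LinearMap.det_toContinuousLinearMap, LinearMap.det_toLin', det_diagonal,
      abs_of_pos hprod, ← ENNReal.ofReal_mul hprod.le, prod_exp_mul_lcfusnPdf_exp]
  · intro y hy
    have hnot_pos : ¬ ∀ i, 0 < y i := fun hpos =>
      hy ⟨fun i => Real.log (y i), funext fun i => Real.exp_log (hpos i)⟩
    simp [lcfusnPdf, hnot_pos]

/-- If `Z*` has the `CFUSN_{n,m}(Δ)` density, then `Y = exp(Z*)`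
(componentwise) has the `LCFUSN_{n,m}(Δ)` density. -/
theorem lcfusn_density_of_cfusn
    {Ω : Type*} [MeasureSpace Ω] [IsProbabilityMeasure (volume : Measure Ω)]
    (n m : ℕ) (Δ : Matrix (Fin n) (Fin m) ℝ)
    (hΔ : ∀ a : Fin m → ℝ, Real.sqrt (∑ j, a j ^ 2) = 1 →
      Real.sqrt (∑ i, (Δ *ᵥ a) i ^ 2) < 1)
    (Z : Ω → Fin n → ℝ) (hZ : Measurable Z)
    (hlaw : Measure.map Z volume =
      (volume : Measure (Fin n → ℝ)).withDensity fun z => ENNReal.ofReal (cfusnPdf Δ z)) :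
    Measure.map (fun ω i => Real.exp (Z ω i)) volume =
      (volume : Measure (Fin n → ℝ)).withDensity fun y => ENNReal.ofReal (lcfusnPdf Δ y) :=
  lcfusn_density_of_cfusn_general n m Δ Z hZ hlaw
end

section
/- If Y ~ LCFUSN_{n,m}(Δ), then its cumulative distribution function is F_Y(y) = P(Y₁ ≤ y₁, …, Y_n ≤ y_n) = 2^m · Φ_{n+m}((ln y′, 0′)′ | Ω) for y ∈ (0,∞)^n, where Ω is the (n+m)×(n+m) matrix with blocks Ω = [[I_n, −Δ],[−Δ′, I_m]] and Φ_{n+m}(·|Ω) is the cdf of N_{n+m}(0, Ω). -/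
/-!
Write `Y = exp Z` componentwise. The change of variables `u = exp x`, whose Jacobian is `∏ exp xᵢ`,
turns the LCFUSN density into the CFUSN density `2^m φₙ(x) Φₘ(Δᵀx | S)` with `S = I - ΔᵀΔ`, so
`F_Y(y) = F_Z(ln y)`. Since `S` is the Schur complement of the identity block of `Ω`, the
`N(0, Ω)` density factorises as `φₙ(x) · φ_S(w + Δᵀx)`; integrating over `w ≤ 0` gives
`Φₘ(Δᵀx | S)`, and Fubini identifies `F_Z(t)` with `2^m Φₙ₊ₘ((t, 0) | Ω)`. The norm bound on
`Δ` makes `S`, hence `Ω`, positive definite, so every Gaussian integral involved is finite.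
-/

open MeasureTheory Matrix Real ProbabilityTheory

section LinearAlgebra

variable {ι : Type*} [Fintype ι]

lemma dotProduct_self_eq_sum_sq (v : ι → ℝ) : v ⬝ᵥ v = ∑ i, v i ^ 2 := by
  simp [dotProduct, sq]

lemma sum_sq_smul (c : ℝ) (v : ι → ℝ) : ∑ i, (c • v) i ^ 2 = c ^ 2 * ∑ i, v i ^ 2 := by
  simp [Finset.mul_sum, mul_pow]

lemma sum_sq_mulVec_le {κ : Type*} [Fintype κ] (A : Matrix κ ι ℝ) (v : ι → ℝ) :
    ∑ i, (A *ᵥ v) i ^ 2 ≤ (∑ i, ∑ j, A i j ^ 2) * ∑ j, v j ^ 2 := by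
  rw [Finset.sum_mul]
  exact Finset.sum_le_sum fun i _ => by
    simpa [mulVec, dotProduct] using Finset.sum_mul_sq_le_sq_mul_sq Finset.univ (A i) v

open scoped MatrixOrder in
/-- With `R = √M`, `v = R⁻¹ (R v)` bounds `∑ vᵢ²` by a multiple of `∑ (R v)ᵢ² = v ⬝ M v`. -/
lemma Matrix.PosDef.exists_pos_mul_sum_sq_le [DecidableEq ι] {M : Matrix ι ι ℝ} (hM : M.PosDef) :
    ∃ ε > 0, ∀ v : ι → ℝ, ε * ∑ i, v i ^ 2 ≤ v ⬝ᵥ M *ᵥ v := by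
  set R := CFC.sqrt M
  have hR_symm : Rᵀ = R := (CFC.sqrt_nonneg M).posSemidef.1
  have hRR : R * R = M := CFC.sqrt_mul_sqrt_self M hM.posSemidef.nonneg
  have hR_unit : IsUnit R.det := by
    refine isUnit_iff_ne_zero.mpr fun h => hM.det_pos.ne' ?_
    rw [← hRR, det_mul, h, zero_mul]
  set C := ∑ i, ∑ j, R⁻¹ i j ^ 2
  have hC : 0 ≤ C := by positivity
  refine ⟨(C + 1)⁻¹, by positivity, fun v => ?_⟩
  have hquad : v ⬝ᵥ M *ᵥ v = ∑ i, (R *ᵥ v) i ^ 2 := by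
    rw [← dotProduct_self_eq_sum_sq, ← hRR, ← mulVec_mulVec, dotProduct_mulVec, ← hR_symm,
      vecMul_transpose, hR_symm]
  have hbound : ∑ i, v i ^ 2 ≤ C * ∑ i, (R *ᵥ v) i ^ 2 := by
    simpa [mulVec_mulVec, nonsing_inv_mul R hR_unit] using sum_sq_mulVec_le R⁻¹ (R *ᵥ v)
  rw [hquad, inv_mul_le_iff₀ (by positivity)]
  nlinarith [show 0 ≤ ∑ i, (R *ᵥ v) i ^ 2 by positivity]

end LinearAlgebra

section Integration

lemma setLIntegral_Iic_comp_add_right {ι : Type*} [Fintype ι] (f : (ι → ℝ) → ENNReal)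
    (z c : ι → ℝ) :
    ∫⁻ w in Set.Iic z, f (w + c) = ∫⁻ u in Set.Iic (z + c), f u := by
  have := (measurePreserving_add_right volume c).setLIntegral_comp_preimage_emb
    (measurableEmbedding_addRight c) f (Set.Iic (z + c))
  rwa [Set.preimage_add_const_Iic, add_sub_cancel_right] at this

lemma setLIntegral_Iic_sumElim {ι κ : Type*} [Fintype ι] [Fintype κ]
    {f : (ι ⊕ κ → ℝ) → ENNReal} (hf : Measurable f) (s : ι → ℝ) (t : κ → ℝ) :
    ∫⁻ z in Set.Iic (s ⊕ᵥ t), f z = ∫⁻ x in Set.Iic s, ∫⁻ w in Set.Iic t, f (x ⊕ᵥ w) := by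
  let e := (MeasurableEquiv.sumPiEquivProdPi fun _ : ι ⊕ κ => ℝ).symm
  have hpre : e ⁻¹' Set.Iic (s ⊕ᵥ t) = Set.Iic s ×ˢ Set.Iic t := by
    ext ⟨x, w⟩
    simp [e, Pi.le_def, Sum.forall, MeasurableEquiv.coe_sumPiEquivProdPi_symm]
  rw [← (volume_measurePreserving_sumPiEquivProdPi_symm _).setLIntegral_comp_preimage_emb
    e.measurableEmbedding, hpre, Measure.volume_eq_prod]
  exact setLIntegral_prod _ (hf.comp e.measurable).aemeasurable

lemma hasFDerivAt_exp_pi {ι : Type*} [Fintype ι] [DecidableEq ι] (x : ι → ℝ) :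
    HasFDerivAt (fun u i => Real.exp (u i))
      (toLin' (diagonal fun i => Real.exp (x i))).toContinuousLinearMap x := by
  refine hasFDerivAt_pi'.mpr fun i => ?_
  have hcomp : ContinuousLinearMap.proj i ∘L
      (toLin' (diagonal fun i => Real.exp (x i))).toContinuousLinearMap =
        Real.exp (x i) • ContinuousLinearMap.proj i := by
    ext v
    simp [mulVec_diagonal]
  rw [hcomp]
  exact (hasFDerivAt_apply i x).exp

lemma lintegral_image_exp_pi {ι : Type*} [Fintype ι] {s : Set (ι → ℝ)} (hs : MeasurableSet s)
    (f : (ι → ℝ) → ENNReal) :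
    ∫⁻ u in (fun x i => Real.exp (x i)) '' s, f u =
      ∫⁻ x in s, ENNReal.ofReal (∏ i, Real.exp (x i)) * f fun i => Real.exp (x i) := by
  classical
  have hinj : Set.InjOn (fun (x : ι → ℝ) i => Real.exp (x i)) s :=
    fun a _ b _ hab => funext fun i => Real.exp_injective (congrFun hab i)
  rw [lintegral_image_eq_lintegral_abs_det_fderiv_mul volume hs
    (fun x _ => (hasFDerivAt_exp_pi x).hasFDerivWithinAt) hinj]
  refine setLIntegral_congr_fun hs fun x _ => ?_
  rw [ContinuousLinearMap.det, LinearMap.coe_toContinuousLinearMap, LinearMap.det_toLin',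
    det_diagonal, abs_of_pos (Finset.prod_pos fun i _ => Real.exp_pos _)]

lemma image_exp_pi_Iic_log {ι : Type*} {y : ι → ℝ} (hy : ∀ i, 0 < y i) :
    (fun (x : ι → ℝ) i => Real.exp (x i)) '' Set.Iic (fun i => Real.log (y i)) =
      {u | ∀ i, 0 < u i} ∩ Set.Iic y := by
  ext u
  simp only [Set.mem_image, Set.mem_inter_iff, Set.mem_Iic, Set.mem_ofPred, Pi.le_def]
  constructor
  · rintro ⟨x, hx, rfl⟩
    exact ⟨fun i => Real.exp_pos _, fun i => (Real.le_log_iff_exp_le (hy i)).mp (hx i)⟩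
  · rintro ⟨hpos, hle⟩
    exact ⟨fun i => Real.log (u i), fun i => Real.log_le_log (hpos i) (hle i),
      funext fun i => Real.exp_log (hpos i)⟩

end Integration

section Gaussian

variable {ι : Type*} [Fintype ι]

lemma stdNormalPdf_nonneg (x : ι → ℝ) : 0 ≤ stdNormalPdf x := by
  unfold stdNormalPdf; positivity

variable [DecidableEq ι]

lemma normalPdf_nonneg (μ : ι → ℝ) {S : Matrix ι ι ℝ} (hS : 0 ≤ S.det) (x : ι → ℝ) :
    0 ≤ normalPdf μ S x := by
  unfold normalPdf; positivity

lemma normalCdf_nonneg (μ : ι → ℝ) {S : Matrix ι ι ℝ} (hS : 0 ≤ S.det) (z : ι → ℝ) :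
    0 ≤ normalCdf μ S z :=
  setIntegral_nonneg measurableSet_Iic fun x _ => normalPdf_nonneg μ hS x

lemma continuous_normalPdf (μ : ι → ℝ) (S : Matrix ι ι ℝ) : Continuous (normalPdf μ S) := by
  unfold normalPdf
  simp only [dotProduct, mulVec]
  fun_prop

lemma norm_normalPdf_le {S : Matrix ι ι ℝ} (hS : S.PosDef) {ε : ℝ}
    (hε : ∀ v : ι → ℝ, ε * ∑ i, v i ^ 2 ≤ v ⬝ᵥ S⁻¹ *ᵥ v) (x : ι → ℝ) :
    ‖normalPdf 0 S x‖ ≤ S.det ^ (-(1 : ℝ) / 2) * ∏ i, Real.exp (-(ε / 2) * x i ^ 2) := by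
  have hnorm : (2 * π) ^ (-(Fintype.card ι : ℝ) / 2) ≤ 1 :=
    Real.rpow_le_one_of_one_le_of_nonpos (by nlinarith [Real.pi_gt_three])
      (by have := (Fintype.card ι).cast_nonneg (α := ℝ); linarith)
  have hexp : Real.exp (-(x ⬝ᵥ (S⁻¹ *ᵥ x)) / 2) ≤ ∏ i, Real.exp (-(ε / 2) * x i ^ 2) := by
    rw [← Real.exp_sum, ← Finset.mul_sum]
    exact Real.exp_le_exp.mpr (by linarith [hε x])
  have hdet := Real.rpow_nonneg hS.det_pos.le (-(1 : ℝ) / 2)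
  rw [Real.norm_of_nonneg (normalPdf_nonneg 0 hS.det_pos.le x), normalPdf, sub_zero]
  calc _ ≤ 1 * S.det ^ (-(1 : ℝ) / 2) * Real.exp (-(x ⬝ᵥ (S⁻¹ *ᵥ x)) / 2) := by gcongr
    _ ≤ _ := by rw [one_mul]; gcongr

lemma integrable_normalPdf (μ : ι → ℝ) {S : Matrix ι ι ℝ} (hS : S.PosDef) :
    Integrable (normalPdf μ S) := by
  obtain ⟨ε, hε, hcoer⟩ := hS.inv.exists_pos_mul_sum_sq_le
  have hgauss : Integrable fun x : ι → ℝ => ∏ i, Real.exp (-(ε / 2) * x i ^ 2) :=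
    Integrable.fintype_prod (f := fun _ t => Real.exp (-(ε / 2) * t ^ 2))
      fun _ => integrable_exp_neg_mul_sq (by positivity)
  have hcentered : Integrable (normalPdf 0 S) :=
    (hgauss.const_mul _).mono' (continuous_normalPdf 0 S).aestronglyMeasurable
      (ae_of_all _ (norm_normalPdf_le hS hcoer))
  have hshift : normalPdf μ S = fun x => normalPdf 0 S (x - μ) := by
    funext x; simp only [normalPdf, sub_zero]
  exact hshift ▸ hcentered.comp_sub_right μ

lemma ofReal_normalCdf (μ : ι → ℝ) {S : Matrix ι ι ℝ} (hS : S.PosDef) (z : ι → ℝ) :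
    ENNReal.ofReal (normalCdf μ S z) = ∫⁻ x in Set.Iic z, ENNReal.ofReal (normalPdf μ S x) :=
  ofReal_integral_eq_lintegral_ofReal (integrable_normalPdf μ hS).integrableOn
    (ae_of_all _ (normalPdf_nonneg μ hS.det_pos.le))

end Gaussian

section BlockMatrix

variable {ι κ : Type*} [Fintype ι] [Fintype κ] (Δ : Matrix ι κ ℝ)

lemma sum_sq_mulVec_lt_sum_sq
    (hΔ : ∀ a : κ → ℝ, √(∑ j, a j ^ 2) = 1 → √(∑ i, (Δ *ᵥ a) i ^ 2) < 1)
    {w : κ → ℝ} (hw : w ≠ 0) : ∑ i, (Δ *ᵥ w) i ^ 2 < ∑ j, w j ^ 2 := by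
  have hpos : 0 < ∑ j, w j ^ 2 := by
    obtain ⟨j, hj⟩ := Function.ne_iff.mp hw
    exact Finset.sum_pos' (fun _ _ => sq_nonneg _)
      ⟨j, Finset.mem_univ j, pow_two_pos_of_ne_zero hj⟩
  set r := √(∑ j, w j ^ 2)
  have hr : 0 < r := Real.sqrt_pos.mpr hpos
  have hr2 : r ^ 2 = ∑ j, w j ^ 2 := Real.sq_sqrt hpos.le
  have hunit : √(∑ j, (r⁻¹ • w) j ^ 2) = 1 := by
    rw [sum_sq_smul, ← hr2, inv_pow, inv_mul_cancel₀ (by positivity), Real.sqrt_one]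
  have := hΔ _ hunit
  rwa [Real.sqrt_lt' one_pos, mulVec_smul, sum_sq_smul, inv_pow, one_pow,
    inv_mul_lt_iff₀ (by positivity), mul_one, hr2] at this

lemma posDef_one_sub_transpose_mul_self [DecidableEq κ]
    (h : ∀ w : κ → ℝ, w ≠ 0 → ∑ i, (Δ *ᵥ w) i ^ 2 < ∑ j, w j ^ 2) :
    (1 - Δᵀ * Δ).PosDef := by
  rw [posDef_iff_dotProduct_mulVec]
  refine ⟨?_, fun w hw => ?_⟩
  · simpa [conjTranspose_eq_transpose_of_trivial] using
      isHermitian_one.sub (isHermitian_conjTranspose_mul_self Δ)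
  · have := h w hw
    rw [star_trivial, sub_mulVec, one_mulVec, dotProduct_sub, ← mulVec_mulVec, dotProduct_mulVec,
      vecMul_transpose, dotProduct_self_eq_sum_sq, dotProduct_self_eq_sum_sq]
    linarith

variable [DecidableEq ι] [DecidableEq κ]

lemma det_fromBlocks_one_neg :
    (fromBlocks 1 (-Δ) (-Δᵀ) 1 : Matrix (ι ⊕ κ) (ι ⊕ κ) ℝ).det = (1 - Δᵀ * Δ).det := by
  rw [det_fromBlocks_one₁₁, Matrix.neg_mul, Matrix.mul_neg, neg_neg]

lemma posDef_fromBlocks_one_neg (hS : (1 - Δᵀ * Δ).PosDef) :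
    (fromBlocks 1 (-Δ) (-Δᵀ) 1 : Matrix (ι ⊕ κ) (ι ⊕ κ) ℝ).PosDef := by
  have : Invertible (1 : Matrix ι ι ℝ) := invertibleOne
  have hsemi : (fromBlocks 1 (-Δ) (-Δᵀ) 1 : Matrix (ι ⊕ κ) (ι ⊕ κ) ℝ).PosSemidef := by
    have := (PosDef.fromBlocks₁₁ (-Δ) (1 : Matrix κ κ ℝ) (A := (1 : Matrix ι ι ℝ)) PosDef.one).mpr
      (by simpa [conjTranspose_eq_transpose_of_trivial] using hS.posSemidef)
    simpa [conjTranspose_eq_transpose_of_trivial] using this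
  rw [hsemi.posDef_iff_det_ne_zero, det_fromBlocks_one_neg]
  exact hS.det_pos.ne'

lemma inv_fromBlocks_one_neg_mulVec (hS : IsUnit (1 - Δᵀ * Δ).det) (x : ι → ℝ) (w : κ → ℝ) :
    (fromBlocks 1 (-Δ) (-Δᵀ) 1)⁻¹ *ᵥ (x ⊕ᵥ w) =
      (x + Δ *ᵥ ((1 - Δᵀ * Δ)⁻¹ *ᵥ (w + Δᵀ *ᵥ x))) ⊕ᵥ ((1 - Δᵀ * Δ)⁻¹ *ᵥ (w + Δᵀ *ᵥ x)) := by
  set z := (1 - Δᵀ * Δ)⁻¹ *ᵥ (w + Δᵀ *ᵥ x)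
  have hz : (1 - Δᵀ * Δ) *ᵥ z = w + Δᵀ *ᵥ x := by
    rw [mulVec_mulVec, mul_nonsing_inv _ hS, one_mulVec]
  rw [sub_mulVec, one_mulVec, ← mulVec_mulVec] at hz
  have := invertibleOfIsUnitDet _ ((det_fromBlocks_one_neg Δ).symm ▸ hS)
  refine inv_mulVec_eq_vec ?_
  rw [fromBlocks_mulVec]
  simp only [Sum.elim_comp_inl, Sum.elim_comp_inr, one_mulVec, neg_mulVec, mulVec_add]
  congr 1
  · abel
  · linear_combination -hz

lemma dotProduct_inv_fromBlocks_one_neg_mulVec (hS : IsUnit (1 - Δᵀ * Δ).det)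
    (x : ι → ℝ) (w : κ → ℝ) :
    (x ⊕ᵥ w) ⬝ᵥ ((fromBlocks 1 (-Δ) (-Δᵀ) 1)⁻¹ *ᵥ (x ⊕ᵥ w)) =
      ∑ i, x i ^ 2 + (w + Δᵀ *ᵥ x) ⬝ᵥ ((1 - Δᵀ * Δ)⁻¹ *ᵥ (w + Δᵀ *ᵥ x)) := by
  rw [inv_fromBlocks_one_neg_mulVec Δ hS, sumElim_dotProduct_sumElim, dotProduct_add,
    dotProduct_mulVec x Δ, ← mulVec_transpose, ← dotProduct_self_eq_sum_sq, add_dotProduct]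
  ring

lemma normalPdf_fromBlocks_one_neg (hS : IsUnit (1 - Δᵀ * Δ).det) (x : ι → ℝ) (w : κ → ℝ) :
    normalPdf 0 (fromBlocks 1 (-Δ) (-Δᵀ) 1) (x ⊕ᵥ w) =
      stdNormalPdf x * normalPdf 0 (1 - Δᵀ * Δ) (w + Δᵀ *ᵥ x) := by
  have hpow : (2 * π) ^ (-(Fintype.card (ι ⊕ κ) : ℝ) / 2) =
      (2 * π) ^ (-(Fintype.card ι : ℝ) / 2) * (2 * π) ^ (-(Fintype.card κ : ℝ) / 2) := by
    rw [← Real.rpow_add (by positivity), Fintype.card_sum, Nat.cast_add]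
    ring_nf
  simp only [normalPdf, stdNormalPdf, sub_zero]
  rw [dotProduct_inv_fromBlocks_one_neg_mulVec Δ hS, det_fromBlocks_one_neg, hpow, neg_add,
    add_div, Real.exp_add]
  ring

end BlockMatrix

section Distribution

variable {ι κ : Type*} [Fintype ι] [Fintype κ] [DecidableEq κ] (Δ : Matrix ι κ ℝ)

lemma setLIntegral_lcfusnPdf_Iic {y : ι → ℝ} (hy : ∀ i, 0 < y i) :
    ∫⁻ u in Set.Iic y, ENNReal.ofReal (lcfusnPdf Δ u) =
      ∫⁻ x in Set.Iic (fun i => Real.log (y i)), ENNReal.ofReal (cfusnPdf Δ x) := by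
  have hpos : MeasurableSet {u : ι → ℝ | ∀ i, 0 < u i} := by measurability
  have hsupp : (fun u => ENNReal.ofReal (lcfusnPdf Δ u)) =
      {u | ∀ i, 0 < u i}.indicator fun u => ENNReal.ofReal (lcfusnPdf Δ u) := by
    funext u
    by_cases hu : ∀ i, 0 < u i <;> simp [hu, lcfusnPdf]
  rw [hsupp, setLIntegral_indicator hpos, ← image_exp_pi_Iic_log hy,
    lintegral_image_exp_pi measurableSet_Iic]
  refine setLIntegral_congr_fun measurableSet_Iic fun x _ => ?_
  have hprod : 0 < ∏ i, Real.exp (x i) := Finset.prod_pos fun i _ => Real.exp_pos _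
  rw [← ENNReal.ofReal_mul hprod.le, lcfusnPdf, if_pos fun i => Real.exp_pos _]
  simp only [Real.log_exp, cfusnPdf]
  congr 1
  field_simp

variable [DecidableEq ι]

lemma setLIntegral_cfusnPdf_Iic (hS : (1 - Δᵀ * Δ).PosDef) (t : ι → ℝ) :
    ∫⁻ x in Set.Iic t, ENNReal.ofReal (cfusnPdf Δ x) =
      ENNReal.ofReal (2 ^ Fintype.card κ * normalCdf 0 (fromBlocks 1 (-Δ) (-Δᵀ) 1) (t ⊕ᵥ 0)) := by
  have hinner (x : ι → ℝ) :
      ∫⁻ w in Set.Iic 0, ENNReal.ofReal (normalPdf 0 (fromBlocks 1 (-Δ) (-Δᵀ) 1) (x ⊕ᵥ w)) =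
        ENNReal.ofReal (stdNormalPdf x * normalCdf 0 (1 - Δᵀ * Δ) (Δᵀ *ᵥ x)) := by
    simp_rw [normalPdf_fromBlocks_one_neg Δ hS.det_pos.ne'.isUnit,
      ENNReal.ofReal_mul (stdNormalPdf_nonneg x)]
    rw [lintegral_const_mul' _ _ ENNReal.ofReal_ne_top, ofReal_normalCdf 0 hS,
      setLIntegral_Iic_comp_add_right (fun u => ENNReal.ofReal (normalPdf 0 _ u)), zero_add]
  have hmeas : Measurable fun z => ENNReal.ofReal (normalPdf 0 (fromBlocks 1 (-Δ) (-Δᵀ) 1) z) :=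
    ENNReal.measurable_ofReal.comp (continuous_normalPdf 0 _).measurable
  rw [ENNReal.ofReal_mul (by positivity), ofReal_normalCdf 0 (posDef_fromBlocks_one_neg Δ hS),
    setLIntegral_Iic_sumElim hmeas, ← lintegral_const_mul' _ _ ENNReal.ofReal_ne_top]
  refine lintegral_congr fun x => ?_
  rw [hinner, ← ENNReal.ofReal_mul (by positivity), cfusnPdf, mul_assoc]

end Distribution

theorem lcfusn_cdf_general
    {Ω : Type*} [MeasureSpace Ω]
    (n m : ℕ) (Δ : Matrix (Fin n) (Fin m) ℝ)
    (hΔ : ∀ a : Fin m → ℝ, Real.sqrt (∑ j, a j ^ 2) = 1 →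
      Real.sqrt (∑ i, (Δ *ᵥ a) i ^ 2) < 1)
    (Y : Ω → Fin n → ℝ) (hY : Measurable Y)
    (hlaw : Measure.map Y volume =
      (volume : Measure (Fin n → ℝ)).withDensity fun y => ENNReal.ofReal (lcfusnPdf Δ y)) :
    ∀ y : Fin n → ℝ, (∀ i, 0 < y i) →
      (volume {ω | ∀ i, Y ω i ≤ y i}).toReal =
        2 ^ m * normalCdf 0 (Matrix.fromBlocks 1 (-Δ) (-Δᵀ) 1)
          (Sum.elim (fun i => Real.log (y i)) (0 : Fin m → ℝ)) := by
  intro y hy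
  have hS : (1 - Δᵀ * Δ).PosDef :=
    posDef_one_sub_transpose_mul_self Δ fun _ hw => sum_sq_mulVec_lt_sum_sq Δ hΔ hw
  have hcdf : volume {ω | ∀ i, Y ω i ≤ y i} =
      ∫⁻ u in Set.Iic y, ENNReal.ofReal (lcfusnPdf Δ u) := by
    rw [← withDensity_apply _ measurableSet_Iic, ← hlaw, Measure.map_apply hY measurableSet_Iic]
    rfl
  rw [hcdf, setLIntegral_lcfusnPdf_Iic Δ hy, setLIntegral_cfusnPdf_Iic Δ hS, Fintype.card_fin,
    ENNReal.toReal_ofReal]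
  exact mul_nonneg (by positivity)
    (normalCdf_nonneg 0 (posDef_fromBlocks_one_neg Δ hS).det_pos.le _)

/-- If `Y ~ LCFUSN_{n,m}(Δ)`, then its cdf is
`F_Y(y) = 2^m Φ_{n+m}((ln y, 0) | Ω)` for `y ∈ (0,∞)^n`, where
`Ω = [[I_n, -Δ],[-Δᵀ, I_m]]`. -/
theorem lcfusn_cdf
    {Ω : Type*} [MeasureSpace Ω] [IsProbabilityMeasure (volume : Measure Ω)]
    (n m : ℕ) (Δ : Matrix (Fin n) (Fin m) ℝ)
    (hΔ : ∀ a : Fin m → ℝ, Real.sqrt (∑ j, a j ^ 2) = 1 →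
      Real.sqrt (∑ i, (Δ *ᵥ a) i ^ 2) < 1)
    (Y : Ω → Fin n → ℝ) (hY : Measurable Y)
    (hlaw : Measure.map Y volume =
      (volume : Measure (Fin n → ℝ)).withDensity fun y => ENNReal.ofReal (lcfusnPdf Δ y)) :
    ∀ y : Fin n → ℝ, (∀ i, 0 < y i) →
      (volume {ω | ∀ i, Y ω i ≤ y i}).toReal =
        2 ^ m * normalCdf 0 (Matrix.fromBlocks 1 (-Δ) (-Δᵀ) 1)
          (Sum.elim (fun i => Real.log (y i)) (0 : Fin m → ℝ)) :=
  lcfusn_cdf_general n m Δ hΔ Y hY hlaw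
end
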